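/- Let i and j be natural numbers such that i is odd or j is odd. Then ∫_0^Ω Sn(θ)^i · Cs(θ)^j dθ = 0. -/

import Mathlib

open intervalIntegral

/-- The period Ω of the generalized trigonometric functions with p = 1, q = l. -/
noncomputable def Omega (l : ℕ) : ℝ :=
  2 * (l : ℝ) ^ (-(1 / 2 : ℝ)) * Real.Gamma (1 / 2) * Real.Gamma (1 / (2 * (l : ℝ))) /
    Real.Gamma (1 / 2 + 1 / (2 * (l : ℝ)))

/-!
The energy `l * Sn ^ 2 + Cs ^ (2 * l)` is conserved, so `(Cs, Sn)` stays in the unit ball, where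
the vector field `(x, y) ↦ (-y, x ^ (2 * l - 1))` is Lipschitz. Uniqueness of solutions turns the
time-reversal symmetries of this odd system into `Cs (-θ) = Cs θ`, `Sn (-θ) = -Sn θ` and, at the
first zero `T` of `Cs`, `Cs (2 * T - θ) = -Cs θ`, `Sn (2 * T - θ) = Sn θ`. So `Sn ^ i * Cs ^ j` is
`4 * T`-periodic and odd about `0` (for odd `i`) or about `T` (for odd `j`), and its integral over
a period vanishes. Finally `Ω = 4 * T`: substituting `c = Cs θ` and using the energy gives
`T = √l * ∫₀¹ (1 - c ^ (2 * l)) ^ (-1/2) dc`, a Beta integral after `t = c ^ (2 * l)`.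
-/

open Set MeasureTheory Real Metric

theorem Function.Periodic.intervalIntegral_add_eq_zero {E : Type*} [NormedAddCommGroup E]
    [NormedSpace ℝ E] {f : ℝ → E} {p : ℝ} (hf : Function.Periodic f p) {c : ℝ}
    (hc : ∀ x, f (c - x) = -f x) (a : ℝ) : ∫ x in a..a + p, f x = 0 := by
  set b := (c - p) / 2
  have hsymm : ∫ x in b..b + p, f x = -∫ x in b..b + p, f x := by
    calc ∫ x in b..b + p, f x = ∫ x in b..b + p, f (c - x) := by
          rw [integral_comp_sub_left]; congr 1 <;> ring
      _ = -∫ x in b..b + p, f x := by simp only [hc, intervalIntegral.integral_neg]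
  rw [hf.intervalIntegral_add_eq a b]
  have : IsAddTorsionFree E := .of_isTorsionFree ℝ E
  exact self_eq_neg.mp hsymm

theorem ContinuousOn.exists_first_zero {f : ℝ → ℝ} {a b : ℝ} (hf : ContinuousOn f (Icc a b))
    (hab : a ≤ b) (ha : 0 < f a) (hb : f b ≤ 0) :
    ∃ T ∈ Ioc a b, f T = 0 ∧ ∀ x ∈ Ico a T, 0 < f x := by
  have hS : IsCompact (Icc a b ∩ f ⁻¹' Iic 0) :=
    isCompact_Icc.of_isClosed_subset (hf.preimage_isClosed_of_isClosed isClosed_Icc isClosed_Iic)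
      inter_subset_left
  obtain ⟨T, ⟨⟨haT, hTb⟩, hfT⟩, hleast⟩ := hS.exists_isLeast ⟨b, ⟨hab, le_rfl⟩, hb⟩
  have hpos : ∀ x ∈ Ico a T, 0 < f x := fun x hx =>
    not_le.1 fun hfx => hx.2.not_ge (hleast ⟨⟨hx.1, hx.2.le.trans hTb⟩, hfx⟩)
  obtain ⟨z, hz, hfz⟩ :=
    intermediate_value_Icc' haT (hf.mono (Icc_subset_Icc_right hTb)) ⟨hfT, ha.le⟩
  obtain rfl : z = T := by_contra fun hne => (hpos z ⟨hz.1, hz.2.lt_of_ne hne⟩).ne' hfz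
  exact ⟨z, ⟨haT.lt_of_ne (by rintro rfl; linarith), hTb⟩, hfz, hpos⟩

theorem integral_Icc_rpow_mul_one_sub_rpow {α β : ℝ} (hα : 0 < α) (hβ : 0 < β) :
    ∫ x in Icc (0 : ℝ) 1, x ^ (α - 1) * (1 - x) ^ (β - 1) = Gamma α * Gamma β / Gamma (α + β) := by
  have hB : Complex.betaIntegral α β =
      ((∫ x in (0 : ℝ)..1, x ^ (α - 1) * (1 - x) ^ (β - 1) : ℝ) : ℂ) := by
    rw [Complex.betaIntegral, ← intervalIntegral.integral_ofReal]
    refine integral_congr fun x hx => ?_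
    rw [uIcc_of_le zero_le_one] at hx
    push_cast
    rw [Complex.ofReal_cpow hx.1, Complex.ofReal_cpow (sub_nonneg.2 hx.2)]
    push_cast; rfl
  have hΓ := Complex.Gamma_mul_Gamma_eq_betaIntegral (s := α) (t := β) (by simpa) (by simpa)
  rw [hB, ← Complex.ofReal_add, Complex.Gamma_ofReal, Complex.Gamma_ofReal,
    Complex.Gamma_ofReal] at hΓ
  norm_cast at hΓ
  rw [integral_Icc_eq_integral_Ioc, ← intervalIntegral.integral_of_le zero_le_one, hΓ,
    mul_div_cancel_left₀ _ (Gamma_pos_of_pos (add_pos hα hβ)).ne']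

theorem pow_sub_one_mul_rpow_inv_sub_one {n : ℕ} (hn : 0 < n) {x : ℝ} (hx : 0 < x) :
    x ^ (n - 1) * (x ^ n) ^ ((n : ℝ)⁻¹ - 1) = 1 := by
  rw [← rpow_natCast x n, ← rpow_mul hx.le, ← rpow_natCast, ← rpow_add hx, Nat.cast_sub hn,
    mul_sub, mul_inv_cancel₀ (by positivity)]
  simp

theorem integral_Icc_one_sub_pow_rpow {n : ℕ} (hn : 0 < n) {β : ℝ} (hβ : 0 < β) :
    ∫ x in Icc (0 : ℝ) 1, (1 - x ^ n) ^ (β - 1) =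
      Gamma (n : ℝ)⁻¹ * Gamma β / (n * Gamma ((n : ℝ)⁻¹ + β)) := by
  have hsubst := integral_Icc_deriv_smul_of_deriv_nonneg (f := fun x : ℝ => x ^ n)
    (f' := fun x => n * x ^ (n - 1))
    (g := fun t => t ^ ((n : ℝ)⁻¹ - 1) * (1 - t) ^ (β - 1)) (continuous_pow n).continuousOn
    (fun x _ => hasDerivAt_pow n x) (fun x hx => by have := hx.1; positivity) zero_le_one
  simp only [smul_eq_mul, one_pow, ne_eq, hn.ne', not_false_eq_true, zero_pow] at hsubst
  rw [integral_Icc_rpow_mul_one_sub_rpow (by positivity) hβ, integral_Icc_eq_integral_Ioo,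
    setIntegral_congr_fun measurableSet_Ioo (g := fun x : ℝ => (n : ℝ) * (1 - x ^ n) ^ (β - 1)),
    MeasureTheory.integral_const_mul] at hsubst
  · rw [integral_Icc_eq_integral_Ioo, mul_comm (n : ℝ), ← div_div, ← hsubst,
      mul_div_cancel_left₀ _ (by positivity)]
  · intro x hx
    simp only
    rw [← mul_assoc, mul_assoc (n : ℝ), pow_sub_one_mul_rpow_inv_sub_one hn hx.1, mul_one]

theorem HasDerivAt.comp_sub_of_anticommute {E : Type*} [NormedAddCommGroup E] [NormedSpace ℝ E]
    {v : E → E} (R : E →L[ℝ] E) (hR : ∀ p, v (R p) = -R (v p)) {f : ℝ → E}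
    (hf : ∀ t, HasDerivAt f (v (f t)) t) (a t : ℝ) :
    HasDerivAt (fun t => R (f (a - t))) (v (R (f (a - t)))) t := by
  have := R.hasFDerivAt.comp_hasDerivAt t ((hf (a - t)).scomp t ((hasDerivAt_id t).const_sub a))
  exact this.congr_deriv (by simp [hR])

def lyapunovField (n : ℕ) (p : ℝ × ℝ) : ℝ × ℝ := (-p.2, p.1 ^ n)

theorem lipschitzOnWith_lyapunovField (n : ℕ) :
    LipschitzOnWith (n + 1) (lyapunovField n) (closedBall 0 1) := by
  rw [lipschitzOnWith_iff_norm_sub_le]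
  intro p hp q hq
  rw [mem_closedBall_zero_iff, Prod.norm_def, max_le_iff] at hp hq
  have h1 : |p.1 - q.1| ≤ ‖p - q‖ := norm_fst_le (p - q)
  have h2 : |p.2 - q.2| ≤ ‖p - q‖ := norm_snd_le (p - q)
  have hpow : |p.1 ^ n - q.1 ^ n| ≤ |p.1 - q.1| * n := by
    calc |p.1 ^ n - q.1 ^ n| ≤ |p.1 - q.1| * n * max |p.1| |q.1| ^ (n - 1) := abs_pow_sub_pow_le ..
      _ ≤ |p.1 - q.1| * n * 1 := by gcongr; exact pow_le_one₀ (by positivity) (max_le hp.1 hq.1)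
      _ = |p.1 - q.1| * n := mul_one _
  rw [norm_prod_le_iff]
  simp only [lyapunovField, Prod.fst_sub, Prod.snd_sub, Real.norm_eq_abs, NNReal.coe_add,
    NNReal.coe_natCast, NNReal.coe_one, neg_sub_neg, abs_sub_comm q.2]
  constructor <;> nlinarith [norm_nonneg (p - q), abs_nonneg (p.1 - q.1)]

theorem lyapunovField_solution_unique {n : ℕ} {f g : ℝ → ℝ × ℝ}
    (hf : ∀ t, HasDerivAt f (lyapunovField n (f t)) t)
    (hg : ∀ t, HasDerivAt g (lyapunovField n (g t)) t)
    (hf₁ : ∀ t, ‖f t‖ ≤ 1) (hg₁ : ∀ t, ‖g t‖ ≤ 1) {t₀ : ℝ} (h : f t₀ = g t₀) : f = g :=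
  ODE_solution_unique_univ (s := fun _ => closedBall 0 1) (v := fun _ => lyapunovField n)
    (fun _ => lipschitzOnWith_lyapunovField n)
    (fun t => ⟨hf t, mem_closedBall_zero_iff.2 (hf₁ t)⟩)
    (fun t => ⟨hg t, mem_closedBall_zero_iff.2 (hg₁ t)⟩) h

structure IsGenTrigPair (l : ℕ) (Cs Sn : ℝ → ℝ) : Prop where
  hasDerivAt_cs : ∀ θ, HasDerivAt Cs (-(Sn θ)) θ
  hasDerivAt_sn : ∀ θ, HasDerivAt Sn (Cs θ ^ (2 * l - 1)) θ
  cs_zero : Cs 0 = 1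
  sn_zero : Sn 0 = 0

namespace IsGenTrigPair

variable {l : ℕ} {Cs Sn : ℝ → ℝ}

theorem continuous_cs (h : IsGenTrigPair l Cs Sn) : Continuous Cs :=
  continuous_iff_continuousAt.2 fun θ => (h.hasDerivAt_cs θ).continuousAt

theorem continuous_sn (h : IsGenTrigPair l Cs Sn) : Continuous Sn :=
  continuous_iff_continuousAt.2 fun θ => (h.hasDerivAt_sn θ).continuousAt

theorem hasDerivAt_pair (h : IsGenTrigPair l Cs Sn) (θ : ℝ) :
    HasDerivAt (fun θ => (Cs θ, Sn θ)) (lyapunovField (2 * l - 1) (Cs θ, Sn θ)) θ :=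
  (h.hasDerivAt_cs θ).prodMk (h.hasDerivAt_sn θ)

theorem energy (h : IsGenTrigPair l Cs Sn) (θ : ℝ) : l * Sn θ ^ 2 + Cs θ ^ (2 * l) = 1 := by
  have hderiv (x : ℝ) : HasDerivAt (fun θ => l * Sn θ ^ 2 + Cs θ ^ (2 * l)) 0 x := by
    refine ((((h.hasDerivAt_sn x).fun_pow 2).const_mul (l : ℝ)).add
      ((h.hasDerivAt_cs x).fun_pow (2 * l))).congr_deriv ?_
    push_cast
    ring
  have := is_const_of_deriv_eq_zero (fun x => (hderiv x).differentiableAt)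
    (fun x => (hderiv x).deriv) θ 0
  simpa [h.cs_zero, h.sn_zero] using this

theorem norm_le_one (h : IsGenTrigPair l Cs Sn) (hl : 0 < l) (θ : ℝ) : ‖(Cs θ, Sn θ)‖ ≤ 1 := by
  have hE := h.energy θ
  have hCs : 0 ≤ Cs θ ^ (2 * l) := (even_two_mul l).pow_nonneg _
  have hl1 : (1 : ℝ) ≤ l := by exact_mod_cast hl
  rw [norm_prod_le_iff, Real.norm_eq_abs, Real.norm_eq_abs]
  constructor
  · rw [← pow_le_one_iff_of_nonneg (abs_nonneg _) (by omega : 2 * l ≠ 0), ← abs_pow,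
      abs_of_nonneg hCs]
    nlinarith [sq_nonneg (Sn θ)]
  · rw [← sq_le_one_iff_abs_le_one]
    nlinarith [sq_nonneg (Sn θ)]

theorem pair_eq_reflect_of_eq (h : IsGenTrigPair l Cs Sn) (hl : 0 < l) (R : ℝ × ℝ →L[ℝ] ℝ × ℝ)
    (hR : ∀ p, lyapunovField (2 * l - 1) (R p) = -R (lyapunovField (2 * l - 1) p))
    (hR₁ : ∀ p, ‖R p‖ = ‖p‖) {a t₀ : ℝ} (h₀ : (Cs t₀, Sn t₀) = R (Cs (a - t₀), Sn (a - t₀)))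
    (θ : ℝ) : (Cs θ, Sn θ) = R (Cs (a - θ), Sn (a - θ)) :=
  congrFun (lyapunovField_solution_unique h.hasDerivAt_pair
    (HasDerivAt.comp_sub_of_anticommute R hR h.hasDerivAt_pair a) (h.norm_le_one hl)
    (fun _ => (hR₁ _).trans_le (h.norm_le_one hl _)) h₀) θ

theorem cs_sn_neg (h : IsGenTrigPair l Cs Sn) (hl : 0 < l) (θ : ℝ) :
    Cs (-θ) = Cs θ ∧ Sn (-θ) = -Sn θ := by
  have := h.pair_eq_reflect_of_eq hl
    ((ContinuousLinearMap.id ℝ ℝ).prodMap (-ContinuousLinearMap.id ℝ ℝ))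
    (fun p => by simp [lyapunovField]) (fun p => by simp [Prod.norm_def]) (a := 0) (t₀ := 0)
    (by simp [h.cs_zero, h.sn_zero]) (-θ)
  simpa using this

theorem cs_sn_two_mul_sub (h : IsGenTrigPair l Cs Sn) (hl : 0 < l) {T : ℝ} (hT : Cs T = 0)
    (θ : ℝ) : Cs (2 * T - θ) = -Cs θ ∧ Sn (2 * T - θ) = Sn θ := by
  have hodd : Odd (2 * l - 1) := ⟨l - 1, by omega⟩
  have := h.pair_eq_reflect_of_eq hl
    ((-ContinuousLinearMap.id ℝ ℝ).prodMap (ContinuousLinearMap.id ℝ ℝ))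
    (fun p => by simp [lyapunovField, hodd.neg_pow]) (fun p => by simp [Prod.norm_def])
    (a := 2 * T) (t₀ := T) (by simp [two_mul, hT]) (2 * T - θ)
  simpa using this

theorem cs_sn_add_two_mul (h : IsGenTrigPair l Cs Sn) (hl : 0 < l) {T : ℝ} (hT : Cs T = 0)
    (θ : ℝ) : Cs (θ + 2 * T) = -Cs θ ∧ Sn (θ + 2 * T) = -Sn θ := by
  rw [show θ + 2 * T = 2 * T - -θ by ring]
  obtain ⟨hCs, hSn⟩ := h.cs_sn_two_mul_sub hl hT (-θ)
  obtain ⟨hCs', hSn'⟩ := h.cs_sn_neg hl θ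
  exact ⟨hCs.trans (by rw [hCs']), hSn.trans hSn'⟩

theorem cs_sn_add_four_mul (h : IsGenTrigPair l Cs Sn) (hl : 0 < l) {T : ℝ} (hT : Cs T = 0)
    (θ : ℝ) : Cs (θ + 4 * T) = Cs θ ∧ Sn (θ + 4 * T) = Sn θ := by
  rw [show θ + 4 * T = θ + 2 * T + 2 * T by ring]
  simp only [h.cs_sn_add_two_mul hl hT, neg_neg, and_self]

theorem exists_cs_nonpos (h : IsGenTrigPair l Cs Sn) : ∃ b, 0 ≤ b ∧ Cs b ≤ 0 := by
  -- Otherwise `Sn` increases, so `Cs' = -Sn < -Sn 1` on `(1, ∞)` and `Cs (1 + Cs 1 / Sn 1) < 0`.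
  by_contra! hpos
  have hmono : StrictMonoOn Sn (Ici 0) :=
    strictMonoOn_of_deriv_pos (convex_Ici 0) h.continuous_sn.continuousOn fun x hx => by
      rw [interior_Ici] at hx
      rw [(h.hasDerivAt_sn x).deriv]
      exact pow_pos (hpos x hx.le) _
  have hSn1 : 0 < Sn 1 := h.sn_zero ▸ hmono self_mem_Ici (mem_Ici.2 zero_le_one) zero_lt_one
  have hCs1 := hpos 1 zero_le_one
  obtain ⟨ξ, hξ, hslope⟩ := exists_hasDerivAt_eq_slope Cs (fun x => -Sn x)
    (lt_add_of_pos_right 1 (div_pos hCs1 hSn1)) h.continuous_cs.continuousOn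
    (fun x _ => h.hasDerivAt_cs x)
  have hSnξ : Sn 1 < Sn ξ :=
    hmono (mem_Ici.2 zero_le_one) (mem_Ici.2 (zero_le_one.trans hξ.1.le)) hξ.1
  have hCsb := hpos (1 + Cs 1 / Sn 1) (by positivity)
  rw [add_sub_cancel_left, eq_div_iff (div_pos hCs1 hSn1).ne'] at hslope
  have : Cs 1 < Sn ξ * (Cs 1 / Sn 1) :=
    calc Cs 1 = Sn 1 * (Cs 1 / Sn 1) := by field_simp
      _ < Sn ξ * (Cs 1 / Sn 1) := mul_lt_mul_of_pos_right hSnξ (div_pos hCs1 hSn1)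
  linarith

theorem exists_first_zero_cs (h : IsGenTrigPair l Cs Sn) :
    ∃ T, 0 < T ∧ Cs T = 0 ∧ ∀ θ ∈ Ico 0 T, 0 < Cs θ := by
  obtain ⟨b, hb, hCsb⟩ := h.exists_cs_nonpos
  obtain ⟨T, hT, hCsT, hpos⟩ := h.continuous_cs.continuousOn.exists_first_zero hb
    (h.cs_zero ▸ zero_lt_one) hCsb
  exact ⟨T, hT.1, hCsT, hpos⟩

theorem first_zero_eq_sqrt_mul_integral (h : IsGenTrigPair l Cs Sn) (hl : 0 < l) {T : ℝ}
    (hT : 0 < T) (hCsT : Cs T = 0) (hpos : ∀ θ ∈ Ico 0 T, 0 < Cs θ) :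
    T = √l * ∫ x in Icc (0 : ℝ) 1, (1 - x ^ (2 * l)) ^ ((2 : ℝ)⁻¹ - 1) := by
  have hmono : StrictMonoOn Sn (Icc 0 T) :=
    strictMonoOn_of_deriv_pos (convex_Icc 0 T) h.continuous_sn.continuousOn fun x hx => by
      rw [interior_Icc] at hx
      rw [(h.hasDerivAt_sn x).deriv]
      exact pow_pos (hpos x ⟨hx.1.le, hx.2⟩) _
  have hSn : ∀ θ ∈ Ioo 0 T, 0 < Sn θ := fun θ hθ =>
    h.sn_zero ▸ hmono (left_mem_Icc.2 hT.le) (Ioo_subset_Icc_self hθ) hθ.1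
  have hsubst := integral_Icc_deriv_smul_of_deriv_nonpos (f := Cs) (f' := fun θ => -Sn θ)
    (g := fun x => (1 - x ^ (2 * l)) ^ ((2 : ℝ)⁻¹ - 1)) h.continuous_cs.continuousOn
    (fun θ _ => h.hasDerivAt_cs θ) (fun θ hθ => neg_nonpos.2 (hSn θ hθ).le) hT.le
  rw [hCsT, h.cs_zero, integral_Icc_eq_integral_Ioo,
    setIntegral_congr_fun measurableSet_Ioo (g := fun _ => -(√l)⁻¹)] at hsubst
  · simp only [MeasureTheory.integral_const, MeasurableSet.univ, measureReal_restrict_apply,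
      univ_inter, volume_real_Ioo, sub_zero, smul_eq_mul, mul_neg, neg_inj] at hsubst
    rw [← hsubst, max_eq_left hT.le]
    field_simp
  · intro θ hθ
    have hE := h.energy θ
    have hl' : (0 : ℝ) < l := by exact_mod_cast hl
    have : 1 - Cs θ ^ (2 * l) = (√l * Sn θ) ^ (2 : ℝ) := by
      rw [rpow_two, mul_pow, sq_sqrt hl'.le]; linarith
    simp only [smul_eq_mul]
    have hSnθ := (hSn θ hθ).ne'
    rw [this, ← rpow_mul (mul_pos (sqrt_pos.2 hl') (hSn θ hθ)).le,
      show (2 : ℝ) * (2⁻¹ - 1) = -1 by norm_num, rpow_neg_one]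
    field_simp

theorem omega_eq_four_mul (h : IsGenTrigPair l Cs Sn) (hl : 0 < l) {T : ℝ} (hT : 0 < T)
    (hCsT : Cs T = 0) (hpos : ∀ θ ∈ Ico 0 T, 0 < Cs θ) : Omega l = 4 * T := by
  rw [h.first_zero_eq_sqrt_mul_integral hl hT hCsT hpos,
    integral_Icc_one_sub_pow_rpow (by omega) (by norm_num), Omega]
  push_cast
  have hl' : (0 : ℝ) < l := by exact_mod_cast hl
  rw [rpow_neg hl'.le, ← sqrt_eq_rpow, one_div, one_div, add_comm]
  have hsq : √(l : ℝ) ^ 2 = l := sq_sqrt hl'.le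
  field_simp
  rw [hsq]
  ring

end IsGenTrigPair

theorem integral_SnCs_odd_eq_zero (l : ℕ) (hl : 2 ≤ l) (Cs Sn : ℝ → ℝ)
    (hCs : ∀ θ : ℝ, HasDerivAt Cs (-(Sn θ)) θ)
    (hSn : ∀ θ : ℝ, HasDerivAt Sn (Cs θ ^ (2 * l - 1)) θ)
    (hCs0 : Cs 0 = 1) (hSn0 : Sn 0 = 0)
    (i j : ℕ) (hodd : Odd i ∨ Odd j) :
    ∫ θ in (0 : ℝ)..(Omega l), Sn θ ^ i * Cs θ ^ j = 0 := by
  have h : IsGenTrigPair l Cs Sn := ⟨hCs, hSn, hCs0, hSn0⟩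
  have hl₀ : 0 < l := by omega
  obtain ⟨T, hT, hCsT, hpos⟩ := h.exists_first_zero_cs
  have hper : Function.Periodic (fun θ => Sn θ ^ i * Cs θ ^ j) (4 * T) := fun θ => by
    simp only [h.cs_sn_add_four_mul hl₀ hCsT θ]
  rw [h.omega_eq_four_mul hl₀ hT hCsT hpos, ← zero_add (4 * T)]
  rcases hodd with hi | hj
  · refine hper.intervalIntegral_add_eq_zero (c := 0) (fun θ => ?_) 0
    simp only [zero_sub, h.cs_sn_neg hl₀ θ, hi.neg_pow, neg_mul]
  · refine hper.intervalIntegral_add_eq_zero (c := 2 * T) (fun θ => ?_) 0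
    simp only [h.cs_sn_two_mul_sub hl₀ hCsT θ, hj.neg_pow, mul_neg]
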